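/- arXiv:2412.05234 — 5 statements merged into one kernel-verified Lean document; each statement's English description precedes it below -/
import Mathlib

section
/- Let u: ℝ → ℝ be concave, nondecreasing, with u(0) = 0 and u(x) < x for all x ≠ 0 (strong risk aversion). For the two-point random variable X_p taking value x with probability p and 0 with probability 1−p, the optimized certainty equivalent OCE(X_p) = sup_{η ∈ ℝ} ( −η + p·u(x+η) + (1−p)·u(η) ) satisfies lim_{p → 0⁺} OCE(X_p)/p = u(x). -/
set_option maxHeartbeats 1600000 in
theorem stmt9 (u : ℝ → ℝ) (hconc : ConcaveOn ℝ Set.univ u) (hmono : Monotone u)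
    (hcont : Continuous u) (h0 : u 0 = 0) (hlt : ∀ x : ℝ, x ≠ 0 → u x < x) (x : ℝ) :
    Filter.Tendsto (fun p : ℝ =>
        (⨆ η : ℝ, (-η + p * u (x + η) + (1 - p) * u η)) / p)
      (nhdsWithin 0 (Set.Ioi 0)) (nhds (u x)) := by
  have hle : ∀ y : ℝ, u y ≤ y := by
    intro y
    rcases eq_or_ne y 0 with h | h
    · simp [h, h0]
    · exact (hlt y h).le
  rw [Metric.tendsto_nhds]
  intro ε hε
  have hE0 : (0:ℝ) < ε / 2 := by linarith
  -- continuity of η ↦ u(x+η) - u(η) at 0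
  have hcontAt : ContinuousAt (fun η : ℝ => u (x + η) - u η) 0 :=
    (((hcont.comp (continuous_const.add continuous_id)).sub hcont)).continuousAt
  obtain ⟨δ0, hδ0pos, hδ0⟩ := Metric.continuousAt_iff.mp hcontAt (ε / 2) hE0
  set δ : ℝ := δ0 / 2 with hδdef
  have hδpos : 0 < δ := by positivity
  have hhb : ∀ η : ℝ, |η| ≤ δ → u (x + η) - u η ≤ u x + ε / 2 := by
    intro η hη
    have h1 : dist η 0 < δ0 := by
      rw [Real.dist_eq, sub_zero]
      have : δ < δ0 := by rw [hδdef]; linarith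
      linarith [hη]
    have h2 := hδ0 h1
    simp only [Real.dist_eq, add_zero, h0, sub_zero] at h2
    have := abs_lt.mp h2
    linarith [this.2]
  have hgp : 0 < δ - u δ := by
    have := hlt δ (ne_of_gt hδpos); linarith
  have hgm : 0 < -δ - u (-δ) := by
    have := hlt (-δ) (by intro h; rw [neg_eq_zero] at h; exact absurd h (ne_of_gt hδpos))
    linarith
  set c : ℝ := |x - u x - ε / 2| with hcdef
  have hc0 : 0 ≤ c := by rw [hcdef]; exact abs_nonneg _
  have h2c : (0:ℝ) < 2 * (1 + c) := by linarith
  set p₀ : ℝ := min (1/2) (min ((δ - u δ) / (2 * (1 + c))) ((-δ - u (-δ)) / (2 * δ))) with hp₀def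
  have hp₀ : 0 < p₀ := by
    apply lt_min (by norm_num)
    exact lt_min (div_pos hgp h2c) (div_pos hgm (by linarith))
  filter_upwards [Ioo_mem_nhdsGT_of_mem (Set.mem_Ico.mpr ⟨le_refl (0:ℝ), hp₀⟩)] with p hp
  obtain ⟨hp0, hpU⟩ := hp
  have hp_half : p ≤ 1/2 := le_of_lt (lt_of_lt_of_le hpU (min_le_left _ _))
  have hpB : p ≤ (δ - u δ) / (2 * (1 + c)) :=
    le_of_lt (lt_of_lt_of_le hpU ((min_le_right _ _).trans (min_le_left _ _)))
  have hpC : p ≤ (-δ - u (-δ)) / (2 * δ) :=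
    le_of_lt (lt_of_lt_of_le hpU ((min_le_right _ _).trans (min_le_right _ _)))
  have hpB' : p * (2 * (1 + c)) ≤ δ - u δ := (le_div_iff₀ h2c).mp hpB
  have hpC' : p * (2 * δ) ≤ -δ - u (-δ) := (le_div_iff₀ (by linarith)).mp hpC
  -- pointwise bound on the objective
  have hbound : ∀ η : ℝ, -η + p * u (x + η) + (1 - p) * u η ≤ p * (u x + ε / 2) := by
    intro η
    rcases le_total η (-δ) with hη | hη
    · -- region C : η ≤ -δ
      have h1 : u (x + η) ≤ u x := hmono (by linarith)
      have hηneg : η < 0 := by linarith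
      have hg0 : u η ≤ η := hle η
      have hconcav : δ * u η ≤ (-η) * u (-δ) := by
        have hηpos : (0:ℝ) < -η := by linarith
        have ht0 : (0:ℝ) ≤ δ / (-η) := by positivity
        have ht1 : δ / (-η) ≤ 1 := by rw [div_le_one hηpos]; linarith
        have hcomb := hconc.2 (Set.mem_univ η) (Set.mem_univ (0:ℝ)) ht0
          (by linarith : (0:ℝ) ≤ 1 - δ / (-η)) (by ring)
        simp only [smul_eq_mul, mul_zero, add_zero, h0] at hcomb
        rw [show δ / (-η) * η = -δ by field_simp [hηneg.ne]] at hcomb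
        rw [div_mul_eq_mul_div, div_le_iff₀ hηpos] at hcomb
        linarith [hcomb]
      have hA : (-η) * (-δ - u (-δ)) ≤ δ * (η - u η) := by nlinarith [hconcav]
      have hB : p * (-η) ≤ (1 - p) * (η - u η) := by
        have h2 : (-η) * (p * (2 * δ)) ≤ (-η) * (-δ - u (-δ)) :=
          mul_le_mul_of_nonneg_left hpC' (by linarith)
        have h3 : δ * (2 * p * (-η)) ≤ δ * (η - u η) := by
          calc δ * (2 * p * (-η)) = (-η) * (p * (2 * δ)) := by ring
            _ ≤ (-η) * (-δ - u (-δ)) := h2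
            _ ≤ δ * (η - u η) := hA
        have h4 : 2 * p * (-η) ≤ η - u η := (mul_le_mul_iff_of_pos_left hδpos).mp h3
        nlinarith [h4, hp_half, hg0]
      have h5 : p * u (x + η) ≤ p * u x := mul_le_mul_of_nonneg_left h1 hp0.le
      nlinarith [hB, h5, mul_nonneg hp0.le hE0.le]
    · rcases le_total η δ with hη2 | hη2
      · -- region A : |η| ≤ δ
        have hh := hhb η (abs_le.mpr ⟨hη, hη2⟩)
        have hg0 : u η ≤ η := hle η
        have hph : p * (u (x + η) - u η) ≤ p * (u x + ε / 2) :=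
          mul_le_mul_of_nonneg_left hh hp0.le
        nlinarith [hph, hg0]
      · -- region B : η ≥ δ
        have h1 : u (x + η) ≤ x + η := hle _
        have hηpos : 0 < η := lt_of_lt_of_le hδpos hη2
        have hconcav : δ * u η ≤ η * u δ := by
          have ht0 : (0:ℝ) ≤ δ / η := by positivity
          have ht1 : δ / η ≤ 1 := by rw [div_le_one hηpos]; exact hη2
          have hcomb := hconc.2 (Set.mem_univ η) (Set.mem_univ (0:ℝ)) ht0
            (by linarith : (0:ℝ) ≤ 1 - δ / η) (by ring)
          simp only [smul_eq_mul, mul_zero, add_zero, h0] at hcomb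
          rw [show δ / η * η = δ by field_simp] at hcomb
          rw [div_mul_eq_mul_div, div_le_iff₀ hηpos] at hcomb
          linarith [hcomb]
        have hgδ : δ - u δ ≤ η - u η := by
          have t1 : δ * (δ - u δ) ≤ δ * (η - u η) := by
            calc δ * (δ - u δ) ≤ η * (δ - u δ) := mul_le_mul_of_nonneg_right hη2 hgp.le
              _ ≤ δ * (η - u η) := by linarith [hconcav]
          exact (mul_le_mul_iff_of_pos_left hδpos).mp t1
        have hp1 : p * u (x + η) ≤ p * (x + η) := mul_le_mul_of_nonneg_left h1 hp0.le
        have hgη : 0 ≤ η - u η := by linarith [hle η]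
        have hpc : p * (x - u x - ε / 2) ≤ p * c := by
          apply mul_le_mul_of_nonneg_left _ hp0.le
          rw [hcdef]; exact le_abs_self _
        have k2 : p * c + p ≤ (1 - p) * (η - u η) := by
          nlinarith [hpB', hgδ, mul_nonneg (by linarith : (0:ℝ) ≤ 1/2 - p) hgη]
        linarith [hp1, k2, hpc, hp0.le]
  have hbdd : BddAbove (Set.range fun η : ℝ => -η + p * u (x + η) + (1 - p) * u η) := by
    refine ⟨p * (u x + ε / 2), ?_⟩
    rintro y ⟨η, rfl⟩
    exact hbound η
  have hub : (⨆ η : ℝ, (-η + p * u (x + η) + (1 - p) * u η)) ≤ p * (u x + ε / 2) :=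
    ciSup_le hbound
  have hlb : p * u x ≤ ⨆ η : ℝ, (-η + p * u (x + η) + (1 - p) * u η) := by
    have h00 := le_ciSup hbdd (0:ℝ)
    simpa [h0] using h00
  have hdiv1 : u x ≤ (⨆ η : ℝ, (-η + p * u (x + η) + (1 - p) * u η)) / p :=
    (le_div_iff₀ hp0).mpr (by linarith [hlb])
  have hdiv2 : (⨆ η : ℝ, (-η + p * u (x + η) + (1 - p) * u η)) / p ≤ u x + ε / 2 :=
    (div_le_iff₀ hp0).mpr (by linarith [hub])
  rw [Real.dist_eq, abs_lt]
  constructor <;> linarith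
end

section
/- Let φ₁*, φ₂*: ℝ → ℝ be nondecreasing convex functions with φ₁*(0) = φ₂*(0) = 0. If the robust OCE risk measure ρ(x) := inf_{θ₁,θ₂} ( −θ₁ − θ₂ + φ₂*(φ₁*(θ₂ − x) + θ₁) ) (applied to the deterministic loss x) satisfies ρ(x) ≥ −x for every x ∈ ℝ, then φ₂*(s) ≥ s for all s ∈ ℝ and φ₁*(s) ≥ s for all s ∈ ℝ. -/
theorem stmt11 (φ₁ φ₂ : ℝ → ℝ) (h₁m : Monotone φ₁) (h₂m : Monotone φ₂)
    (h₁c : ConvexOn ℝ Set.univ φ₁) (h₂c : ConvexOn ℝ Set.univ φ₂)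
    (h₁0 : φ₁ 0 = 0) (h₂0 : φ₂ 0 = 0)
    (hρ : ∀ x θ₁ θ₂ : ℝ, -x ≤ -θ₁ - θ₂ + φ₂ (φ₁ (θ₂ - x) + θ₁)) :
    (∀ s : ℝ, s ≤ φ₂ s) ∧ (∀ s : ℝ, s ≤ φ₁ s) := by
  constructor
  · intro s
    have h := hρ 0 s 0
    simp [h₁0] at h
    linarith
  · intro s
    have h := hρ s (-φ₁ s) (2 * s)
    have : (2 : ℝ) * s - s = s := by ring
    rw [this] at h
    simp [h₂0] at h
    linarith
end

section
/- Let φ₁*, φ₂*: ℝ → ℝ be nondecreasing convex functions. If X and Y are integrable random variables on a probability space with X ≤_cv Y (i.e. E[f(X)] ≤ E[f(Y)] for every convex f for which both expectations exist), then for all θ₁, θ₂ ∈ ℝ: E[φ₂*(φ₁*(θ₂ − X) + θ₁)] ≤ E[φ₂*(φ₁*(θ₂ − Y) + θ₁)], and consequently ρ^l_{oce}(X) ≤ ρ^l_{oce}(Y), where ρ^l_{oce}(Z) = inf_{θ₁,θ₂} ( −θ₁ − θ₂ + E[φ₂*(φ₁*(θ₂ − Z) + θ₁)] ). -/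
open MeasureTheory

theorem stmt12 {Ω : Type*} [MeasurableSpace Ω] (P : Measure Ω) [IsProbabilityMeasure P]
    (φ₁ φ₂ : ℝ → ℝ) (h₁m : Monotone φ₁) (h₂m : Monotone φ₂)
    (h₁c : ConvexOn ℝ Set.univ φ₁) (h₂c : ConvexOn ℝ Set.univ φ₂)
    (X Y : Ω → ℝ) (hX : Integrable X P) (hY : Integrable Y P)
    (hcv : ∀ f : ℝ → ℝ, ConvexOn ℝ Set.univ f →
      Integrable (fun ω => f (X ω)) P → Integrable (fun ω => f (Y ω)) P →
      (∫ ω, f (X ω) ∂P) ≤ ∫ ω, f (Y ω) ∂P)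
    (hIX : ∀ θ₁ θ₂ : ℝ, Integrable (fun ω => φ₂ (φ₁ (θ₂ - X ω) + θ₁)) P)
    (hIY : ∀ θ₁ θ₂ : ℝ, Integrable (fun ω => φ₂ (φ₁ (θ₂ - Y ω) + θ₁)) P) :
    (∀ θ₁ θ₂ : ℝ,
      (∫ ω, φ₂ (φ₁ (θ₂ - X ω) + θ₁) ∂P) ≤ ∫ ω, φ₂ (φ₁ (θ₂ - Y ω) + θ₁) ∂P) ∧
    ((⨅ θ : ℝ × ℝ, ((-θ.1 - θ.2 + ∫ ω, φ₂ (φ₁ (θ.2 - X ω) + θ.1) ∂P : ℝ) : EReal)) ≤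
      ⨅ θ : ℝ × ℝ, ((-θ.1 - θ.2 + ∫ ω, φ₂ (φ₁ (θ.2 - Y ω) + θ.1) ∂P : ℝ) : EReal)) := by
  have key : ∀ θ₁ θ₂ : ℝ,
      (∫ ω, φ₂ (φ₁ (θ₂ - X ω) + θ₁) ∂P) ≤ ∫ ω, φ₂ (φ₁ (θ₂ - Y ω) + θ₁) ∂P := by
    intro θ₁ θ₂
    have hconv : ConvexOn ℝ Set.univ (fun x => φ₂ (φ₁ (θ₂ - x) + θ₁)) := by
      refine ⟨convex_univ, ?_⟩
      intro x _ y _ a b ha hb hab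
      have h1 : θ₂ - (a • x + b • y) = a • (θ₂ - x) + b • (θ₂ - y) := by
        have hb' : b = 1 - a := by linarith
        subst hb'; simp only [smul_eq_mul]; ring
      have h2 : φ₁ (θ₂ - (a • x + b • y)) ≤ a • φ₁ (θ₂ - x) + b • φ₁ (θ₂ - y) := by
        rw [h1]
        exact h₁c.2 (Set.mem_univ _) (Set.mem_univ _) ha hb hab
      have h3 : φ₁ (θ₂ - (a • x + b • y)) + θ₁ ≤
          a • (φ₁ (θ₂ - x) + θ₁) + b • (φ₁ (θ₂ - y) + θ₁) := by
        have hb' : b = 1 - a := by linarith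
        subst hb'; simp only [smul_eq_mul] at *; nlinarith
      calc φ₂ (φ₁ (θ₂ - (a • x + b • y)) + θ₁)
          ≤ φ₂ (a • (φ₁ (θ₂ - x) + θ₁) + b • (φ₁ (θ₂ - y) + θ₁)) := h₂m h3
        _ ≤ a • φ₂ (φ₁ (θ₂ - x) + θ₁) + b • φ₂ (φ₁ (θ₂ - y) + θ₁) :=
            h₂c.2 (Set.mem_univ _) (Set.mem_univ _) ha hb hab
    exact hcv _ hconv (hIX θ₁ θ₂) (hIY θ₁ θ₂)
  refine ⟨key, ?_⟩
  refine iInf_mono fun θ => ?_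
  exact_mod_cast by linarith [key θ.1 θ.2]
end

section
/- Let X: Ω → ℝ satisfy |X| ≤ C(1 + Σ_{i=1}^m |Z_i|) P-almost surely for some constant C > 0 and random variables Z₁,…,Z_m. Let φ₁*, φ₂*: ℝ → ℝ be nondecreasing convex functions. Then for all θ₁, θ₂ ∈ ℝ, E_P[ φ₂*(θ₁ + φ₁*(θ₂ − X)) ] ≤ (1/m) Σ_{i=1}^m E_P[ φ₂*(θ₁ + φ₁*(θ₂ + C(1 + m|Z_i|))) ]. In particular, if each term on the right is finite, then the left side is finite. -/
/-!
Put `h t = φ₂ (θ₁ + φ₁ t)`; it is nondecreasing and convex. Almost surely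
`θ₂ - X ≤ θ₂ + C (1 + ∑ |Zᵢ|)`, and the right-hand side is the average of the
`θ₂ + C (1 + m |Zᵢ|)`, so monotonicity and Jensen's inequality bound `h (θ₂ - X)` by the
average of the `h (θ₂ + C (1 + m |Zᵢ|))`. Integrability of `h (θ₂ - X)` follows since it is
also bounded below by the integrable function `h 0 - (h 1 - h 0) |θ₂ - X|`.
-/

open MeasureTheory Finset

lemma ConvexOn.monotone_comp {E : Type*} [AddCommMonoid E] [Module ℝ E] {s : Set E}
    {f : E → ℝ} {g : ℝ → ℝ} (hg : ConvexOn ℝ Set.univ g) (hgm : Monotone g)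
    (hf : ConvexOn ℝ s f) : ConvexOn ℝ s (g ∘ f) :=
  ⟨hf.1, fun _ hx _ hy _ _ ha hb hab =>
    (hgm (hf.2 hx hy ha hb hab)).trans (hg.2 trivial trivial ha hb hab)⟩

lemma ConvexOn.sub_mul_abs_le_of_monotone {h : ℝ → ℝ} (hc : ConvexOn ℝ Set.univ h)
    (hm : Monotone h) (t : ℝ) : h 0 - (h 1 - h 0) * |t| ≤ h t := by
  have hs : 0 ≤ h 1 - h 0 := sub_nonneg.2 (hm zero_le_one)
  rcases le_or_gt 0 t with ht | ht
  · nlinarith [hm ht, abs_nonneg t]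
  · have hslope : (h 0 - h t) / (0 - t) ≤ (h 1 - h 0) / (1 - 0) :=
      hc.slope_mono_adjacent trivial trivial ht zero_lt_one
    rw [sub_zero, div_one, zero_sub, div_le_iff₀ (neg_pos.2 ht)] at hslope
    rw [abs_of_neg ht]
    linarith

lemma ConvexOn.integrable_comp_of_le {Ω : Type*} [MeasurableSpace Ω] {P : Measure Ω}
    [IsFiniteMeasure P] {h : ℝ → ℝ} (hc : ConvexOn ℝ Set.univ h) (hm : Monotone h)
    {Y g : Ω → ℝ} (hY : Integrable Y P) (hg : Integrable g P)
    (hle : ∀ᵐ ω ∂P, h (Y ω) ≤ g ω) : Integrable (fun ω => h (Y ω)) P :=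
  integrable_of_le_of_le (hm.measurable.comp_aemeasurable hY.aemeasurable).aestronglyMeasurable
    (ae_of_all _ fun ω => hc.sub_mul_abs_le_of_monotone hm (Y ω)) hle
    ((integrable_const _).sub (hY.abs.const_mul _)) hg

lemma add_mul_one_add_sum_eq_average {m : ℕ} (hm : 0 < m) (θ C : ℝ) (z : Fin m → ℝ) :
    θ + C * (1 + ∑ i, z i) = ∑ i, (1 / (m : ℝ)) • (θ + C * (1 + m * z i)) := by
  have hm' : (m : ℝ) ≠ 0 := by positivity
  simp only [smul_eq_mul, ← mul_sum, mul_add, mul_one, sum_add_distrib, sum_const, card_univ,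
    Fintype.card_fin, nsmul_eq_mul, ← mul_assoc, mul_comm C, ← sum_mul]
  field_simp

lemma apply_sub_le_average_of_abs_le {h : ℝ → ℝ} (hc : ConvexOn ℝ Set.univ h)
    (hmono : Monotone h) {m : ℕ} (hm : 0 < m) {θ C x : ℝ} {z : Fin m → ℝ}
    (hx : |x| ≤ C * (1 + ∑ i, |z i|)) :
    h (θ - x) ≤ 1 / (m : ℝ) * ∑ i, h (θ + C * (1 + m * |z i|)) := by
  have hweights : ∑ _i : Fin m, 1 / (m : ℝ) = 1 := by
    rw [sum_const, card_univ, Fintype.card_fin, nsmul_eq_mul]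
    exact mul_one_div_cancel (by positivity)
  calc h (θ - x) ≤ h (θ + C * (1 + ∑ i, |z i|)) := hmono (by linarith [neg_abs_le x])
    _ = h (∑ i, (1 / (m : ℝ)) • (θ + C * (1 + m * |z i|))) := by
      rw [add_mul_one_add_sum_eq_average hm]
    _ ≤ ∑ i, (1 / (m : ℝ)) • h (θ + C * (1 + m * |z i|)) :=
      hc.map_sum_le (fun _ _ => by positivity) hweights (fun _ _ => trivial)
    _ = 1 / (m : ℝ) * ∑ i, h (θ + C * (1 + m * |z i|)) := by simp only [smul_eq_mul, mul_sum]

theorem stmt14_general {Ω : Type*} [MeasurableSpace Ω] (P : Measure Ω) [IsProbabilityMeasure P]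
    (m : ℕ) (hm : 0 < m) (C : ℝ)
    (X : Ω → ℝ) (Z : Fin m → Ω → ℝ)
    (hXint : Integrable X P)
    (hbound : ∀ᵐ ω ∂P, |X ω| ≤ C * (1 + ∑ i, |Z i ω|))
    (φ₁ φ₂ : ℝ → ℝ) (h₁m : Monotone φ₁) (h₂m : Monotone φ₂)
    (h₁c : ConvexOn ℝ Set.univ φ₁) (h₂c : ConvexOn ℝ Set.univ φ₂)
    (θ₁ θ₂ : ℝ)
    (hRHS : ∀ i, Integrable (fun ω => φ₂ (θ₁ + φ₁ (θ₂ + C * (1 + m * |Z i ω|)))) P) :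
    Integrable (fun ω => φ₂ (θ₁ + φ₁ (θ₂ - X ω))) P ∧
    (∫ ω, φ₂ (θ₁ + φ₁ (θ₂ - X ω)) ∂P) ≤
      (1 / (m : ℝ)) * ∑ i, ∫ ω, φ₂ (θ₁ + φ₁ (θ₂ + C * (1 + m * |Z i ω|))) ∂P := by
  set h : ℝ → ℝ := fun t => φ₂ (θ₁ + φ₁ t)
  have hmono : Monotone h := h₂m.comp fun _ _ hab => add_le_add_right (h₁m hab) θ₁
  have hconv : ConvexOn ℝ Set.univ h :=
    h₂c.monotone_comp h₂m ((convexOn_const θ₁ convex_univ).add h₁c)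
  have hle : ∀ᵐ ω ∂P, h (θ₂ - X ω) ≤ 1 / (m : ℝ) * ∑ i, h (θ₂ + C * (1 + m * |Z i ω|)) := by
    filter_upwards [hbound] with ω hω
    exact apply_sub_le_average_of_abs_le hconv hmono hm hω
  have hRHS_sum : Integrable (fun ω => 1 / (m : ℝ) * ∑ i, h (θ₂ + C * (1 + m * |Z i ω|))) P :=
    (integrable_finsetSum _ fun i _ => hRHS i).const_mul _
  have hLHS : Integrable (fun ω => h (θ₂ - X ω)) P :=
    hconv.integrable_comp_of_le hmono ((integrable_const θ₂).sub hXint) hRHS_sum hle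
  refine ⟨hLHS, ?_⟩
  calc (∫ ω, h (θ₂ - X ω) ∂P)
      ≤ ∫ ω, 1 / (m : ℝ) * ∑ i, h (θ₂ + C * (1 + m * |Z i ω|)) ∂P :=
        integral_mono_ae hLHS hRHS_sum hle
    _ = 1 / (m : ℝ) * ∑ i, ∫ ω, h (θ₂ + C * (1 + m * |Z i ω|)) ∂P := by
        rw [integral_const_mul, integral_finsetSum _ fun i _ => hRHS i]

theorem stmt14 {Ω : Type*} [MeasurableSpace Ω] (P : Measure Ω) [IsProbabilityMeasure P]
    (m : ℕ) (hm : 0 < m) (C : ℝ) (hC : 0 < C)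
    (X : Ω → ℝ) (Z : Fin m → Ω → ℝ)
    (hXm : Measurable X) (hZm : ∀ i, Measurable (Z i))
    (hXint : Integrable X P) (hZint : ∀ i, Integrable (Z i) P)
    (hbound : ∀ᵐ ω ∂P, |X ω| ≤ C * (1 + ∑ i, |Z i ω|))
    (φ₁ φ₂ : ℝ → ℝ) (h₁m : Monotone φ₁) (h₂m : Monotone φ₂)
    (h₁c : ConvexOn ℝ Set.univ φ₁) (h₂c : ConvexOn ℝ Set.univ φ₂)
    (θ₁ θ₂ : ℝ)
    (hRHS : ∀ i, Integrable (fun ω => φ₂ (θ₁ + φ₁ (θ₂ + C * (1 + m * |Z i ω|)))) P) :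
    Integrable (fun ω => φ₂ (θ₁ + φ₁ (θ₂ - X ω))) P ∧
    (∫ ω, φ₂ (θ₁ + φ₁ (θ₂ - X ω)) ∂P) ≤
      (1 / (m : ℝ)) * ∑ i, ∫ ω, φ₂ (θ₁ + φ₁ (θ₂ + C * (1 + m * |Z i ω|))) ∂P :=
  stmt14_general P m hm C X Z hXint hbound φ₁ φ₂ h₁m h₂m h₁c h₂c θ₁ θ₂ hRHS
end

section
/- Let γ > 0 and let f₀ be a probability density on ℝ. With the entropic conjugate φ₁*(s) = (e^{γs} − 1)/γ and the KL conjugate φ₂*(s) = e^s − 1, if f₀(x) ≥ c·e^{−a·x²} for all x ≤ x₀ (for some constants c, a > 0, x₀ ∈ ℝ, e.g. f₀ Gaussian), then for every θ₁, θ₂ ∈ ℝ and λ > 0, ∫ λ·φ₂*((φ₁*(θ₂ − x) + θ₁)/λ) f₀(x) dx = +∞. -/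
/-!
Write `E x = ((e^{γ(θ₂ - x)} - 1)/γ + θ₁)/λ` for the argument of `φ₂*`. On `x ≤ x₀` the integrand is
at least `λ c (e^{E x - a x²} - e^{-a x²})`, and `E x - a x²` is a positive multiple of `e^{-γ x}` minus
a quadratic, up to a constant. Exponential growth beats the Gaussian decay, so the integrand tends to
`+∞` as `x → -∞`; in particular it is at least `1` on a half-line, which has infinite Lebesgue measure.
-/

open MeasureTheory Filter Real

lemma lintegral_ofReal_eq_top_of_tendsto_atBot {f : ℝ → ℝ} (hf : Tendsto f atBot atTop) :
    ∫⁻ x, ENNReal.ofReal (f x) = ⊤ := by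
  obtain ⟨M, hM⟩ := eventually_atBot.mp (hf.eventually_ge_atTop 1)
  refine top_unique ?_
  calc (⊤ : ENNReal) = ∫⁻ _ in Set.Iic M, 1 := by simp [Real.volume_Iic]
    _ ≤ ∫⁻ x in Set.Iic M, ENNReal.ofReal (f x) :=
        lintegral_mono_ae <| ae_restrict_of_forall_mem measurableSet_Iic fun x hx =>
          ENNReal.one_le_ofReal.mpr (hM x hx)
    _ ≤ ∫⁻ x, ENNReal.ofReal (f x) := setLIntegral_le_lintegral _ _

lemma tendsto_const_mul_exp_sub_mul_pow_atTop {K b : ℝ} (hK : 0 < K) (hb : 0 < b) (a : ℝ) (n : ℕ) :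
    Tendsto (fun t => K * exp (b * t) - a * t ^ n) atTop atTop := by
  have hexp : Tendsto (fun t => exp (b * t)) atTop atTop :=
    tendsto_exp_atTop.comp (tendsto_id.const_mul_atTop hb)
  have hratio : Tendsto (fun t => K - a * (t ^ n / exp (b * t))) atTop (nhds K) := by
    simpa using ((isLittleO_pow_exp_pos_mul_atTop n hb).tendsto_div_nhds_zero.const_mul a).const_sub K
  refine (hexp.atTop_mul_pos hK hratio).congr fun t => ?_
  field_simp

lemma tendsto_exp_neg_mul_sq_atBot {a : ℝ} (ha : 0 < a) :
    Tendsto (fun x => exp (-a * x ^ 2)) atBot (nhds 0) := by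
  have hsq : Tendsto (fun x : ℝ => x ^ 2) atBot atTop :=
    ((tendsto_pow_atTop two_ne_zero).comp tendsto_abs_atBot_atTop).congr fun x => by simp
  exact tendsto_exp_atBot.comp (by simpa using hsq.const_mul_atTop_of_neg (neg_lt_zero.mpr ha))

lemma tendsto_exp_sub_one_div_add_div_sub_mul_sq_atBot {γ lam : ℝ} (hγ : 0 < γ) (hlam : 0 < lam)
    (θ₁ θ₂ a : ℝ) :
    Tendsto (fun x => ((exp (γ * (θ₂ - x)) - 1) / γ + θ₁) / lam - a * x ^ 2) atBot atTop := by
  have hK : 0 < exp (γ * θ₂) / (γ * lam) := by positivity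
  refine (((tendsto_const_mul_exp_sub_mul_pow_atTop hK hγ a 2).comp tendsto_neg_atBot_atTop).atTop_add
    tendsto_const_nhds (C := θ₁ / lam - 1 / (γ * lam))).congr fun x => ?_
  have hsplit : exp (γ * (θ₂ - x)) = exp (γ * θ₂) * exp (γ * -x) := by
    rw [← exp_add]; ring_nf
  simp only [Function.comp, hsplit, neg_sq]
  field_simp
  ring

theorem stmt18_general (γ lam c a x₀ : ℝ) (hγ : 0 < γ) (hlam : 0 < lam) (hc : 0 < c) (ha : 0 < a)
    (f₀ : ℝ → ℝ)
    (hlower : ∀ x : ℝ, x ≤ x₀ → c * Real.exp (-a * x ^ 2) ≤ f₀ x)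
    (θ₁ θ₂ : ℝ) :
    (∫⁻ x, ENNReal.ofReal
        (lam * (Real.exp (((Real.exp (γ * (θ₂ - x)) - 1) / γ + θ₁) / lam) - 1) * f₀ x)) = ⊤ := by
  have hE := tendsto_exp_sub_one_div_add_div_sub_mul_sq_atBot hγ hlam θ₁ θ₂ a
  set E : ℝ → ℝ := fun x => ((exp (γ * (θ₂ - x)) - 1) / γ + θ₁) / lam
  have hbound : ∀ᶠ x in atBot, lam * c * (exp (E x - a * x ^ 2) - exp (-a * x ^ 2)) ≤
      lam * (exp (E x) - 1) * f₀ x := by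
    filter_upwards [eventually_le_atBot x₀, hE.eventually_ge_atTop 0] with x hx hEx
    have hexpE : 0 ≤ exp (E x) - 1 := by
      have : 0 ≤ E x := by nlinarith [sq_nonneg x]
      linarith [one_le_exp this]
    calc lam * c * (exp (E x - a * x ^ 2) - exp (-a * x ^ 2))
        = lam * (exp (E x) - 1) * (c * exp (-a * x ^ 2)) := by
          rw [show E x - a * x ^ 2 = E x + -a * x ^ 2 by ring, exp_add]; ring
      _ ≤ lam * (exp (E x) - 1) * f₀ x := by gcongr; exact hlower x hx
  refine lintegral_ofReal_eq_top_of_tendsto_atBot (tendsto_atTop_mono' _ hbound ?_)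
  refine Tendsto.const_mul_atTop (by positivity) ?_
  simpa [E, sub_eq_add_neg] using (tendsto_exp_atTop.comp hE).atTop_add (tendsto_exp_neg_mul_sq_atBot ha).neg

theorem stmt18 (γ lam c a x₀ : ℝ) (hγ : 0 < γ) (hlam : 0 < lam) (hc : 0 < c) (ha : 0 < a)
    (f₀ : ℝ → ℝ) (hf₀pos : ∀ x, 0 ≤ f₀ x) (hf₀int : ∫ x, f₀ x = 1)
    (hlower : ∀ x : ℝ, x ≤ x₀ → c * Real.exp (-a * x ^ 2) ≤ f₀ x)
    (θ₁ θ₂ : ℝ) :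
    (∫⁻ x, ENNReal.ofReal
        (lam * (Real.exp (((Real.exp (γ * (θ₂ - x)) - 1) / γ + θ₁) / lam) - 1) * f₀ x)) = ⊤ :=
  stmt18_general γ lam c a x₀ hγ hlam hc ha f₀ hlower θ₁ θ₂
end
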